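/- A commutative Noetherian principal ideal domain with infinitely many maximal ideals has zero Jacobson radical, and hence is a cu-uniserial ring. -/

import Mathlib

/-- The radical of a module: intersection of all maximal submodules. -/
def ModRadical (R M : Type*) [Ring R] [AddCommGroup M] [Module R M] : Submodule R M :=
  sInf {N : Submodule R M | IsCoatom N}

/-- A module is cyclic if it is generated by one element. -/
def IsCyclicMod (R M : Type*) [Ring R] [AddCommGroup M] [Module R M] : Prop :=
  ∃ x : M, Submodule.span R {x} = ⊤

/-- A module is uniform if it is nonzero and any two nonzero submodules intersect nontrivially. -/
def IsUniformMod (R M : Type*) [Ring R] [AddCommGroup M] [Module R M] : Prop :=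
  Nontrivial M ∧ ∀ A B : Submodule R M, A ≠ ⊥ → B ≠ ⊥ → A ⊓ B ≠ ⊥

/-- A module is cyclic-uniform uniserial (cu-uniserial) if it is nonzero and for every
nonzero finitely generated submodule `K`, the quotient `K / Rad K` is cyclic and uniform. -/
def IsCUUniserial (R M : Type*) [Ring R] [AddCommGroup M] [Module R M] : Prop :=
  Nontrivial M ∧ ∀ K : Submodule R M, K ≠ ⊥ → K.FG →
    IsCyclicMod R (↥K ⧸ ModRadical R ↥K) ∧ IsUniformMod R (↥K ⧸ ModRadical R ↥K)

/-! If a nonzero `x` lay in the Jacobson radical, every maximal ideal would contain it. But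
`R ⧸ (x)` has Krull dimension `0`, hence is Artinian and has only finitely many maximal ideals.
Once the radical of `R` vanishes, so does the radical of every ideal `K`, so `K / Rad K ≅ K`,
which is cyclic because `R` is a PID and uniform because `R` is a domain. -/

open nonZeroDivisors

section MaximalIdeals

variable {R : Type*} [CommRing R]

lemma Ideal.finite_setOf_isMaximal_le_of_isArtinianRing_quotient (I : Ideal R)
    [IsArtinianRing (R ⧸ I)] : {J : Ideal R | J.IsMaximal ∧ I ≤ J}.Finite := by
  refine ((IsArtinianRing.setOfPred_isMaximal_finite (R ⧸ I)).image
    (Ideal.comap (Ideal.Quotient.mk I))).subset ?_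
  rintro J ⟨hJ, hIJ⟩
  refine ⟨J.map (Ideal.Quotient.mk I), ?_, Ideal.comap_map_mk hIJ⟩
  exact Ideal.IsMaximal.map_of_surjective_of_ker_le (m := J) Ideal.Quotient.mk_surjective
    (by rwa [Ideal.mk_ker])

lemma isArtinianRing_quotient_span_singleton [IsNoetherianRing R] [Ring.KrullDimLE 1 R]
    {x : R} (hx : x ∈ R⁰) : IsArtinianRing (R ⧸ Ideal.span {x}) := by
  rw [isArtinianRing_iff_krullDimLE_zero, Ring.KrullDimLE, Order.krullDimLE_iff,
    ← ENat.WithBot.add_le_add_one_right_iff, Nat.cast_zero, zero_add]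
  exact (ringKrullDim_quotient_succ_le_of_nonZeroDivisor hx).trans Order.KrullDimLE.krullDim_le

lemma finite_setOf_isMaximal_mem [IsNoetherianRing R] [Ring.KrullDimLE 1 R] {x : R}
    (hx : x ∈ R⁰) : {I : Ideal R | I.IsMaximal ∧ x ∈ I}.Finite := by
  have := isArtinianRing_quotient_span_singleton hx
  simpa only [Ideal.span_singleton_le_iff_mem] using
    (Ideal.span {x}).finite_setOf_isMaximal_le_of_isArtinianRing_quotient

theorem jacobson_bot_eq_bot_of_infinite_setOf_isMaximal [IsDomain R] [IsNoetherianRing R]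
    [Ring.KrullDimLE 1 R] (h : {I : Ideal R | I.IsMaximal}.Infinite) :
    Ideal.jacobson (⊥ : Ideal R) = ⊥ := by
  refine (Submodule.eq_bot_iff _).mpr fun x hx => by_contra fun hx0 => h ?_
  refine (finite_setOf_isMaximal_mem (mem_nonZeroDivisors_of_ne_zero hx0)).subset fun I hI => ?_
  exact ⟨hI, Ideal.mem_sInf.mp hx ⟨bot_le, hI⟩⟩

end MaximalIdeals

section Modules

variable {R M N : Type*} [Ring R] [AddCommGroup M] [Module R M] [AddCommGroup N] [Module R N]

lemma isCyclicMod_span_singleton (x : M) : IsCyclicMod R (Submodule.span R {x}) := by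
  refine ⟨⟨x, Submodule.mem_span_singleton_self x⟩, ?_⟩
  refine eq_top_iff.mpr fun ⟨y, hy⟩ _ => ?_
  obtain ⟨c, rfl⟩ := Submodule.mem_span_singleton.mp hy
  exact Submodule.mem_span_singleton.mpr ⟨c, rfl⟩

lemma IsCyclicMod.of_surjective {f : M →ₗ[R] N} (hf : Function.Surjective f)
    (h : IsCyclicMod R M) : IsCyclicMod R N := by
  obtain ⟨x, hx⟩ := h
  refine ⟨f x, ?_⟩
  rw [← Set.image_singleton, ← Submodule.map_span, hx, Submodule.map_top,
    LinearMap.range_eq_top.mpr hf]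

lemma IsUniformMod.of_linearEquiv (e : M ≃ₗ[R] N) (h : IsUniformMod R M) :
    IsUniformMod R N := by
  obtain ⟨hM, hu⟩ := h
  refine ⟨e.symm.toEquiv.nontrivial, fun A B hA hB => ?_⟩
  let φ := (Submodule.orderIsoMapComap e).symm
  simpa only [ne_eq, ← φ.map_inf, map_eq_bot_iff] using
    hu (φ A) (φ B) ((map_eq_bot_iff φ).not.mpr hA) ((map_eq_bot_iff φ).not.mpr hB)

end Modules

section Domain

variable {R : Type*} [CommRing R] [IsDomain R]

lemma isUniformMod_ideal {K : Ideal R} (hK : K ≠ ⊥) : IsUniformMod R K := by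
  refine ⟨Submodule.nontrivial_iff_ne_bot.mpr hK, fun A B hA hB hAB => ?_⟩
  obtain ⟨u, hu, hu0⟩ := Submodule.exists_mem_ne_zero_of_ne_bot hA
  obtain ⟨v, hv, hv0⟩ := Submodule.exists_mem_ne_zero_of_ne_bot hB
  have huv : (u : R) • v ∈ A ⊓ B := by
    refine ⟨?_, B.smul_mem _ hv⟩
    have hcomm : (u : R) • v = (v : R) • u := Subtype.ext (mul_comm (u : R) v)
    exact hcomm ▸ A.smul_mem _ hu
  rw [hAB, Submodule.mem_bot, Subtype.ext_iff] at huv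
  exact mul_ne_zero (Subtype.coe_ne_coe.mpr hu0) (Subtype.coe_ne_coe.mpr hv0) huv

theorem isCUUniserial_of_jacobson_bot_eq_bot [IsPrincipalIdealRing R]
    (h : Ideal.jacobson (⊥ : Ideal R) = ⊥) : IsCUUniserial R R := by
  refine ⟨inferInstance, fun K hK _ => ⟨?_, ?_⟩⟩
  · obtain ⟨a, rfl⟩ := (IsPrincipalIdealRing.principal K).principal
    exact (isCyclicMod_span_singleton a).of_surjective (Submodule.mkQ_surjective _)
  · have hrad : ModRadical R K = ⊥ :=
      Module.jacobson_eq_bot_of_injective K.subtype K.injective_subtype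
        (Ideal.jacobson_bot.symm.trans h)
    exact (isUniformMod_ideal hK).of_linearEquiv (Submodule.quotEquivOfEqBot _ hrad).symm

end Domain

theorem stmt15 {R : Type*} [CommRing R] [IsDomain R] [IsPrincipalIdealRing R]
    (hmax : {I : Ideal R | IsCoatom I}.Infinite) :
    Ideal.jacobson (⊥ : Ideal R) = ⊥ ∧ IsCUUniserial R R := by
  have hjac : Ideal.jacobson (⊥ : Ideal R) = ⊥ :=
    jacobson_bot_eq_bot_of_infinite_setOf_isMaximal <| by
      simpa only [Ideal.isMaximal_def] using hmax
  exact ⟨hjac, isCUUniserial_of_jacobson_bot_eq_bot hjac⟩
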